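/- arXiv:2203.10337 — 4 statements merged into one kernel-verified Lean document; each statement's English description precedes it below -/
import Mathlib

section
/- Let X and Y be simple graphs on m vertices and let X̃ and Ỹ be simple graphs on n ≥ m vertices. If X is isomorphic to a subgraph of X̃ and Y is isomorphic to a subgraph of Ỹ, then FS(X, Y) is isomorphic to a subgraph of FS(X̃, Ỹ); that is, there exists an injective map from the vertex set of FS(X, Y) to the vertex set of FS(X̃, Ỹ) that maps adjacent vertices to adjacent vertices. -/
open SimpleGraph

/-- The friends-and-strangers graph `FS X Y`: its vertices are the bijections from `V(X)`
to `V(Y)`, with `σ, τ` adjacent iff they differ by a swap along an edge of `X` whose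
images under `σ` form an edge of `Y`. -/
def FS {V W : Type*} (X : SimpleGraph V) (Y : SimpleGraph W) : SimpleGraph (V ≃ W) where
  Adj σ τ := ∃ a b : V, X.Adj a b ∧ Y.Adj (σ a) (σ b) ∧ τ a = σ b ∧ τ b = σ a ∧
      ∀ c : V, c ≠ a → c ≠ b → τ c = σ c
  symm := by
    constructor
    rintro σ τ ⟨a, b, hX, hY, h1, h2, h3⟩
    refine ⟨a, b, hX, ?_, h2.symm, h1.symm, fun c hca hcb => (h3 c hca hcb).symm⟩
    rw [h1, h2]; exact hY.symm
  loopless := by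
    constructor
    rintro σ ⟨a, b, hX, hY, h1, h2, h3⟩
    exact hY.ne h1

/-- `H` is isomorphic to a subgraph of `G`: there is an injective map on vertices sending
adjacent vertices to adjacent vertices. -/
def IsIsoToSubgraphOf {α β : Type*} (H : SimpleGraph α) (G : SimpleGraph β) : Prop :=
  ∃ f : α → β, Function.Injective f ∧ ∀ a b : α, H.Adj a b → G.Adj (f a) (f b)

/-!
Fix embeddings `f : X → X'`, `g : Y → Y'` and one bijection `e` between the complements of
their images (these have the same size `n - m`). Each `σ : V ≃ W` extends to `V' ≃ W'` by
`f a ↦ g (σ a)` and `e` off the image of `f`. The extension restricts to `σ`, so it is injective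
in `σ`, and a swap of `σ` along an edge `ab` becomes the swap along `f a f b`, which is an edge
of `X'` whose image `g (σ a) g (σ b)` is an edge of `Y'`, while the values off the image of `f`
do not move.
-/

open Function Set

namespace Equiv

variable {V W V' W' : Type*} {f : V → V'} {g : W → W'}

open scoped Classical in
noncomputable def extendAlong (hf : Injective f) (hg : Injective g)
    (e : ↥(range f)ᶜ ≃ ↥(range g)ᶜ) (σ : V ≃ W) : V' ≃ W' :=
  (Set.sumCompl (range f)).symm.trans
    ((((ofInjective f hf).symm.trans (σ.trans (ofInjective g hg))).sumCongr e).trans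
      (Set.sumCompl (range g)))

variable (hf : Injective f) (hg : Injective g) (e : ↥(range f)ᶜ ≃ ↥(range g)ᶜ)

theorem extendAlong_apply_apply (σ : V ≃ W) (a : V) :
    extendAlong hf hg e σ (f a) = g (σ a) := by
  classical
  have : (Set.sumCompl (range f)).symm (f a) = Sum.inl ⟨f a, a, rfl⟩ :=
    Set.sumCompl_symm_apply_of_mem _
  simp [extendAlong, this]

theorem extendAlong_apply_of_notMem (σ : V ≃ W) {c : V'} (hc : c ∉ range f) :
    extendAlong hf hg e σ c = e ⟨c, hc⟩ := by
  classical
  have : (Set.sumCompl (range f)).symm c = Sum.inr ⟨c, hc⟩ :=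
    Set.sumCompl_symm_apply_of_notMem hc
  simp [extendAlong, this]

theorem extendAlong_injective : Injective (extendAlong hf hg e) := fun σ τ h =>
  Equiv.ext fun a => hg <| by
    rw [← extendAlong_apply_apply hf hg e, ← extendAlong_apply_apply hf hg e, h]

end Equiv

theorem Fintype.card_compl_range_of_injective {V V' : Type*} [Fintype V] [Fintype V']
    [DecidableEq V'] {f : V → V'} (hf : Injective f) :
    Fintype.card ↥(range f)ᶜ = Fintype.card V' - Fintype.card V := by
  rw [Fintype.card_compl_set, Set.card_range_of_injective hf]

section FS

variable {V W V' W' : Type*} {X : SimpleGraph V} {Y : SimpleGraph W}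
  {X' : SimpleGraph V'} {Y' : SimpleGraph W'} {f : V → V'} {g : W → W'}

theorem FS_adj_extendAlong (hf : Injective f) (hg : Injective g)
    (hfX : ∀ a b, X.Adj a b → X'.Adj (f a) (f b)) (hgY : ∀ a b, Y.Adj a b → Y'.Adj (g a) (g b))
    (e : ↥(range f)ᶜ ≃ ↥(range g)ᶜ) {σ τ : V ≃ W} (h : (FS X Y).Adj σ τ) :
    (FS X' Y').Adj (Equiv.extendAlong hf hg e σ) (Equiv.extendAlong hf hg e τ) := by
  obtain ⟨a, b, hab, hσab, hτa, hτb, hτ⟩ := h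
  refine ⟨f a, f b, hfX a b hab, ?_, ?_, ?_, fun c hca hcb => ?_⟩
  · simpa only [Equiv.extendAlong_apply_apply] using hgY _ _ hσab
  · simp only [Equiv.extendAlong_apply_apply, hτa]
  · simp only [Equiv.extendAlong_apply_apply, hτb]
  by_cases hc : c ∈ range f
  · obtain ⟨d, rfl⟩ := hc
    simp only [Equiv.extendAlong_apply_apply,
      hτ d (ne_of_apply_ne f hca) (ne_of_apply_ne f hcb)]
  · simp only [Equiv.extendAlong_apply_of_notMem _ _ _ _ hc]

theorem IsIsoToSubgraphOf.FS_of_card_eq [Fintype V] [Fintype W] [Fintype V'] [Fintype W']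
    (hVW : Fintype.card V = Fintype.card W) (hVW' : Fintype.card V' = Fintype.card W')
    (hX : IsIsoToSubgraphOf X X') (hY : IsIsoToSubgraphOf Y Y') :
    IsIsoToSubgraphOf (FS X Y) (FS X' Y') := by
  classical
  obtain ⟨f, hf, hfX⟩ := hX
  obtain ⟨g, hg, hgY⟩ := hY
  have hcompl : Fintype.card ↥(range f)ᶜ = Fintype.card ↥(range g)ᶜ := by
    rw [Fintype.card_compl_range_of_injective hf, Fintype.card_compl_range_of_injective hg,
      hVW, hVW']
  let e := Fintype.equivOfCardEq hcompl
  exact ⟨Equiv.extendAlong hf hg e, Equiv.extendAlong_injective hf hg e,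
    fun _ _ => FS_adj_extendAlong hf hg hfX hgY e⟩

end FS

theorem stmt1_general {V W V' W' : Type} [Fintype V] [Fintype W] [Fintype V'] [Fintype W']
    (m n : ℕ)
    (hV : Fintype.card V = m) (hW : Fintype.card W = m)
    (hV' : Fintype.card V' = n) (hW' : Fintype.card W' = n)
    (X : SimpleGraph V) (Y : SimpleGraph W) (X' : SimpleGraph V') (Y' : SimpleGraph W')
    (hX : IsIsoToSubgraphOf X X') (hY : IsIsoToSubgraphOf Y Y') :
    IsIsoToSubgraphOf (FS X Y) (FS X' Y') :=
  hX.FS_of_card_eq (hV.trans hW.symm) (hV'.trans hW'.symm) hY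

/-- If `X, Y` are graphs on `m` vertices, `X', Y'` are graphs on `n ≥ m` vertices, `X` is
isomorphic to a subgraph of `X'` and `Y` is isomorphic to a subgraph of `Y'`, then
`FS(X, Y)` is isomorphic to a subgraph of `FS(X', Y')`. -/
theorem stmt1 {V W V' W' : Type} [Fintype V] [Fintype W] [Fintype V'] [Fintype W']
    (m n : ℕ) (hmn : m ≤ n)
    (hV : Fintype.card V = m) (hW : Fintype.card W = m)
    (hV' : Fintype.card V' = n) (hW' : Fintype.card W' = n)
    (X : SimpleGraph V) (Y : SimpleGraph W) (X' : SimpleGraph V') (Y' : SimpleGraph W')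
    (hX : IsIsoToSubgraphOf X X') (hY : IsIsoToSubgraphOf Y Y') :
    IsIsoToSubgraphOf (FS X Y) (FS X' Y') :=
  stmt1_general m n hV hW hV' hW' X Y X' Y' hX hY
end

section
/- Let X and Y be simple graphs on the same number n of vertices. The girth of FS(X, Y) equals 4 if and only if either (i) X contains two vertex-disjoint edges and Y contains two vertex-disjoint edges, or (ii) X contains a triangle (a subgraph isomorphic to K_3) and Y contains a triangle. -/
/-!
Every edge of `FS X Y` composes a bijection with a transposition, so the sign of `σ⁻¹ ∘ τ` is
`(-1)` to the length of any walk from `σ` to `τ`: the graph is bipartite and its girth is at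
least `4`. Around a `4`-cycle the four transpositions `t₁ t₂ t₃ t₄`, along edges of `X`, multiply
to `1`. If `t₁` and `t₂` are disjoint they are two disjoint edges of `X`, and their images under
`σ₀` two disjoint edges of `Y`. Otherwise `t₁ t₂` is a `3`-cycle on some `{p, v, q}` equal to
`(t₃ t₄)⁻¹`, which forces one of `t₃, t₄` to be `(p q)`: a triangle in `X`; inverting the
bijections gives a `4`-cycle of `FS Y X` of the same kind, hence a triangle in `Y`. Conversely,
two disjoint edges give commuting transpositions and a triangle gives `(a b)(b c) = (a c)(a b)`,
and either identity closes up a `4`-cycle.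
-/

open SimpleGraph

namespace Equiv

variable {α : Type*}

theorem exists_extending_pair {β ι : Type*} [Finite ι] (e : α ≃ β) {f : ι → α}
    {g : ι → β} (hf : f.Injective) (hg : g.Injective) : ∃ σ : α ≃ β, ∀ i, σ (f i) = g i :=
  let ⟨π, hπ⟩ := Perm.exists_extending_pair (e ∘ f) g (e.injective.comp hf) hg
  ⟨e.trans π, hπ⟩

variable [DecidableEq α]

theorem sym2_eq_of_swap_apply_eq {a b x y : α} (h : swap a b x = y) (hxy : x ≠ y) :
    s(a, b) = s(x, y) := by
  rw [swap_apply_def] at h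
  split_ifs at h <;> simp_all

theorem swap_mul_swap_apply_ne_self {a b c d : α} (hab : a ≠ b) (hne : swap a b ≠ swap c d) :
    (swap a b * swap c d) a ≠ a := by
  intro h
  rw [Perm.mul_apply, swap_apply_eq_iff, swap_apply_left] at h
  rcases Sym2.eq_iff.mp (sym2_eq_of_swap_apply_eq h hab) with ⟨rfl, rfl⟩ | ⟨rfl, rfl⟩
  · exact hne rfl
  · exact hne (swap_comm _ _)

theorem symm_swap_trans {β : Type*} [DecidableEq β] (σ : α ≃ β) (a b : α) :
    ((swap a b).trans σ).symm = (swap (σ a) (σ b)).trans σ.symm := by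
  rw [← symm_trans_swap_trans, symm_trans, trans_assoc, trans_assoc, self_trans_symm, trans_refl,
    symm_swap]

end Equiv

open Equiv

namespace SimpleGraph

variable {α : Type*} {G : SimpleGraph α}

def HasFourCycle (G : SimpleGraph α) : Prop :=
  ∃ a b c d, G.Adj a b ∧ G.Adj b c ∧ G.Adj c d ∧ G.Adj d a ∧ a ≠ c ∧ b ≠ d

def HasTriangle (G : SimpleGraph α) : Prop :=
  ∃ a b c, G.Adj a b ∧ G.Adj b c ∧ G.Adj a c

def HasTwoDisjointEdges (G : SimpleGraph α) : Prop :=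
  ∃ a b c d, G.Adj a b ∧ G.Adj c d ∧ a ≠ c ∧ a ≠ d ∧ b ≠ c ∧ b ≠ d

theorem Adj.of_swap_eq [DecidableEq α] {a b c d : α} (h : G.Adj a b) (hs : swap a b = swap c d) :
    G.Adj c d := by
  have : swap c d a = b := by rw [← hs, swap_apply_left]
  rw [← mem_edgeSet, sym2_eq_of_swap_apply_eq this h.ne]
  exact h

/-- Both `a` and `b` are moved by the `3`-cycle `(v q) (p v)`, so `(a b)` is a swap of two of
`p, v, q`; if it is `(p v)`, then `(c d) = (p v) (v q) (p v) = (p q)`. -/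
theorem adj_of_swap_mul_swap_eq_swap_mul_swap [DecidableEq α] {a b c d p v q : α}
    (hab : G.Adj a b) (hcd : G.Adj c d) (hpv : p ≠ v) (hvq : v ≠ q) (hpq : p ≠ q)
    (h : swap a b * swap c d = swap v q * swap p v) (hne : swap a b ≠ swap v q) : G.Adj p q := by
  have hfix : ∀ x, x ≠ p → x ≠ v → x ≠ q → (swap v q * swap p v) x = x := fun x hp hv hq => by
    rw [Perm.mul_apply, swap_apply_of_ne_of_ne hp hv, swap_apply_of_ne_of_ne hv hq]
  have hne' : swap a b ≠ swap c d := fun h' => by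
    have hp := congrArg (· p) h
    rw [h', swap_mul_self, Perm.one_apply, Perm.mul_apply, swap_apply_left,
      swap_apply_left] at hp
    exact hpq hp
  have hmem : ∀ x, (swap a b * swap c d) x ≠ x → x = p ∨ x = v ∨ x = q := fun x hx => by
    by_contra! hx'
    exact hx (h ▸ hfix x hx'.1 hx'.2.1 hx'.2.2)
  have ha := hmem a (swap_mul_swap_apply_ne_self hab.ne hne')
  have hb := hmem b (by
    rw [swap_comm a b] at hne' ⊢
    exact swap_mul_swap_apply_ne_self hab.ne.symm hne')
  have hcd_pq : swap a b = swap p v → G.Adj p q := fun h' => hcd.of_swap_eq <| by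
    calc swap c d = swap a b * (swap a b * swap c d) := (swap_mul_self_mul _ _ _).symm
      _ = swap p v * swap v q * swap p v := by rw [h, h', mul_assoc]
      _ = swap (swap p v v) (swap p v q) := by rw [swap_apply_apply, swap_inv]
      _ = swap p q := by rw [swap_apply_right, swap_apply_of_ne_of_ne hpq.symm hvq.symm]
  rcases ha with rfl | rfl | rfl <;> rcases hb with rfl | rfl | rfl
  all_goals first
    | exact absurd rfl hab.ne | exact hab | exact hab.symm | exact hcd_pq rfl
    | exact hcd_pq (swap_comm _ _) | exact absurd rfl hne | exact absurd (swap_comm _ _) hne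

theorem egirth_le_four_of_hasFourCycle (h : G.HasFourCycle) : G.egirth ≤ 4 := by
  obtain ⟨a, b, c, d, hab, hbc, hcd, hda, hac, hbd⟩ := h
  have hcyc : (Walk.cons hab (.cons hbc (.cons hcd (.cons hda .nil)))).IsCycle := by
    simp only [Walk.cons_isCycle_iff, Walk.isPath_def, Walk.support_cons, Walk.support_nil,
      Walk.edges_cons, Walk.edges_nil, List.nodup_cons, List.mem_cons, List.not_mem_nil,
      Sym2.eq_iff]
    have := hab.ne; have := hbc.ne; have := hcd.ne; have := hda.ne
    tauto
  exact egirth_le_length hcyc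

theorem hasFourCycle_of_egirth_eq_four (h : G.egirth = 4) : G.HasFourCycle := by
  have hcyc : ¬ G.IsAcyclic := by
    rw [← egirth_eq_top, h]
    exact ENat.natCast_ne_top 4
  obtain ⟨a, w, hw, hlen⟩ := exists_egirth_eq_length.mpr hcyc
  rw [h] at hlen
  match w, hw, hlen with
  | .cons hab (.cons hbc (.cons hcd (.cons hda .nil))), hw, _ =>
    have := hw.support_nodup
    simp only [Walk.support_cons, Walk.support_nil, List.tail_cons, List.nodup_cons,
      List.mem_cons, List.not_mem_nil, not_or] at this
    exact ⟨_, _, _, _, hab, hbc, hcd, hda, Ne.symm this.2.1.2.1, this.1.2.1⟩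

theorem four_le_egirth_of_isBipartite (hG : G.IsBipartite) : 4 ≤ G.egirth := by
  rw [le_egirth]
  intro a w hw
  obtain ⟨k, hk⟩ := two_colorable_iff_forall_loop_even.mp hG a w
  have := hw.three_le_length
  exact_mod_cast (show 4 ≤ w.length by omega)

theorem egirth_eq_four_iff_hasFourCycle (hG : G.IsBipartite) :
    G.egirth = 4 ↔ G.HasFourCycle :=
  ⟨hasFourCycle_of_egirth_eq_four, fun h =>
    le_antisymm (egirth_le_four_of_hasFourCycle h) (four_le_egirth_of_isBipartite hG)⟩

end SimpleGraph

namespace FS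

variable {V W : Type*} [DecidableEq V] {X : SimpleGraph V} {Y : SimpleGraph W} {σ τ : V ≃ W}

theorem adj_iff :
    (FS X Y).Adj σ τ ↔ ∃ a b, X.Adj a b ∧ Y.Adj (σ a) (σ b) ∧ τ = (swap a b).trans σ := by
  constructor
  · rintro ⟨a, b, hX, hY, ha, hb, hc⟩
    refine ⟨a, b, hX, hY, Equiv.ext fun x => ?_⟩
    rcases eq_or_ne x a with rfl | hxa
    · simpa using ha
    rcases eq_or_ne x b with rfl | hxb
    · simpa using hb
    · simp [hc x hxa hxb, swap_apply_of_ne_of_ne hxa hxb]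
  · rintro ⟨a, b, hX, hY, rfl⟩
    exact ⟨a, b, hX, hY, by simp, by simp,
      fun c hca hcb => by simp [swap_apply_of_ne_of_ne hca hcb]⟩

theorem adj_swap_trans {a b : V} (hX : X.Adj a b) (hY : Y.Adj (σ a) (σ b)) :
    (FS X Y).Adj σ ((swap a b).trans σ) :=
  adj_iff.mpr ⟨a, b, hX, hY, rfl⟩

theorem adj_of_adj_swap_trans {a b : V} (h : (FS X Y).Adj σ ((swap a b).trans σ)) :
    X.Adj a b := by
  obtain ⟨c, d, hcd, -, hσ⟩ := adj_iff.mp h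
  refine hcd.of_swap_eq ?_
  simpa [trans_assoc] using (congrArg (·.trans σ.symm) hσ).symm

theorem adj_symm [DecidableEq W] (h : (FS X Y).Adj σ τ) : (FS Y X).Adj σ.symm τ.symm := by
  obtain ⟨a, b, hX, hY, rfl⟩ := adj_iff.mp h
  rw [symm_swap_trans]
  exact adj_swap_trans hY (by simpa using hX)

theorem sign_trans_symm_eq_neg_one_pow_length [Fintype V] (w : (FS X Y).Walk σ τ) :
    Perm.sign (τ.trans σ.symm) = (-1) ^ w.length := by
  induction w with
  | nil => simp
  | @cons σ ρ τ h w ih =>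
    obtain ⟨a, b, hX, -, rfl⟩ := adj_iff.mp h
    have : τ.trans σ.symm = swap a b * τ.trans ((swap a b).trans σ).symm := by
      ext; simp
    rw [this, Perm.sign_mul, Perm.sign_swap hX.ne, ih, Walk.length_cons, pow_succ']

theorem isBipartite [Fintype V] : (FS X Y).IsBipartite :=
  two_colorable_iff_forall_loop_even.mpr fun σ w => by
    have := sign_trans_symm_eq_neg_one_pow_length w
    rw [self_trans_symm, ← Perm.one_def, map_one] at this
    exact (neg_one_pow_eq_one_iff_even (by decide)).mp this.symm

theorem hasTriangle_of_square {σ₀ σ₁ σ₂ σ₃ : V ≃ W} {p v q : V} (h₀₁ : (FS X Y).Adj σ₀ σ₁)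
    (h₁₂ : (FS X Y).Adj σ₁ σ₂) (h₂₃ : (FS X Y).Adj σ₂ σ₃) (h₃₀ : (FS X Y).Adj σ₃ σ₀)
    (h₀₂ : σ₀ ≠ σ₂) (h₁₃ : σ₁ ≠ σ₃) (hσ₁ : σ₁ = (swap p v).trans σ₀)
    (hσ₂ : σ₂ = (swap v q).trans σ₁) : X.HasTriangle := by
  subst hσ₁ hσ₂
  have hpv := adj_of_adj_swap_trans h₀₁
  have hvq := adj_of_adj_swap_trans h₁₂
  have hpq : p ≠ q := by
    rintro rfl
    exact h₀₂ (by ext; simp [swap_comm p v])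
  obtain ⟨a, b, hab, -, rfl⟩ := adj_iff.mp h₂₃
  obtain ⟨c, d, hcd, -, hσ₀⟩ := adj_iff.mp h₃₀
  refine ⟨p, v, q, hpv, hvq, adj_of_swap_mul_swap_eq_swap_mul_swap hab hcd hpv.ne hvq.ne hpq ?_
    fun h => h₁₃ (by rw [h]; ext; simp)⟩
  -- the four swaps around the square multiply to `1`
  ext x
  rw [Perm.mul_apply, Perm.mul_apply, eq_comm, swap_apply_eq_iff, swap_apply_eq_iff]
  simpa using congrArg (σ₀.symm ·) (congrFun (congrArg DFunLike.coe hσ₀) x)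

theorem disjointEdges_or_triangles_of_hasFourCycle [DecidableEq W] (h : (FS X Y).HasFourCycle) :
    (X.HasTwoDisjointEdges ∧ Y.HasTwoDisjointEdges) ∨ (X.HasTriangle ∧ Y.HasTriangle) := by
  obtain ⟨σ₀, σ₁, σ₂, σ₃, h₀₁, h₁₂, h₂₃, h₃₀, h₀₂, h₁₃⟩ := h
  obtain ⟨a, b, hab, hYab, hσ₁⟩ := adj_iff.mp h₀₁
  obtain ⟨c, d, hcd, hYcd, hσ₂⟩ := adj_iff.mp h₁₂
  by_cases hshare : a = c ∨ a = d ∨ b = c ∨ b = d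
  · obtain ⟨p, v, q, hpv, hvq⟩ : ∃ p v q, swap a b = swap p v ∧ swap c d = swap v q := by
      rcases hshare with rfl | rfl | rfl | rfl
      · exact ⟨b, a, d, swap_comm _ _, rfl⟩
      · exact ⟨b, a, c, swap_comm _ _, swap_comm _ _⟩
      · exact ⟨a, b, d, rfl, rfl⟩
      · exact ⟨a, b, c, rfl, swap_comm _ _⟩
    rw [hpv] at hσ₁
    rw [hvq] at hσ₂
    have hσ₁v : σ₁ v = σ₀ p := by simp [hσ₁]
    refine .inr ⟨hasTriangle_of_square h₀₁ h₁₂ h₂₃ h₃₀ h₀₂ h₁₃ hσ₁ hσ₂,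
      hasTriangle_of_square (adj_symm h₀₁) (adj_symm h₁₂) (adj_symm h₂₃) (adj_symm h₃₀)
        (symm_bijective.injective.ne h₀₂) (symm_bijective.injective.ne h₁₃)
        (p := σ₀ v) (v := σ₀ p) (q := σ₁ q) ?_ ?_⟩
    · rw [hσ₁, symm_swap_trans, swap_comm]
    · rw [hσ₂, symm_swap_trans, hσ₁v]
  · simp only [not_or] at hshare
    obtain ⟨hac, had, hbc, hbd⟩ := hshare
    have hσ₁c : σ₁ c = σ₀ c := by simp [hσ₁, swap_apply_of_ne_of_ne (Ne.symm hac) (Ne.symm hbc)]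
    have hσ₁d : σ₁ d = σ₀ d := by simp [hσ₁, swap_apply_of_ne_of_ne (Ne.symm had) (Ne.symm hbd)]
    rw [hσ₁c, hσ₁d] at hYcd
    exact .inl ⟨⟨a, b, c, d, hab, hcd, hac, had, hbc, hbd⟩,
      ⟨_, _, _, _, hYab, hYcd, σ₀.injective.ne hac, σ₀.injective.ne had, σ₀.injective.ne hbc,
        σ₀.injective.ne hbd⟩⟩

theorem hasFourCycle_of_hasTwoDisjointEdges [DecidableEq W] (e : V ≃ W)
    (hX : X.HasTwoDisjointEdges) (hY : Y.HasTwoDisjointEdges) : (FS X Y).HasFourCycle := by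
  obtain ⟨a, b, c, d, hab, hcd, hac, had, hbc, hbd⟩ := hX
  obtain ⟨x, y, z, u, hxy, hzu, hxz, hxu, hyz, hyu⟩ := hY
  obtain ⟨σ, hσ⟩ := exists_extending_pair e (f := ![a, b, c, d]) (g := ![x, y, z, u])
    (by simp [Function.Injective, Fin.forall_fin_succ, hab.ne, hcd.ne, hac, had, hbc, hbd, eq_comm])
    (by simp [Function.Injective, Fin.forall_fin_succ, hxy.ne, hzu.ne, hxz, hxu, hyz, hyu, eq_comm])
  obtain ⟨hσa, hσb, hσc, hσd⟩ : σ a = x ∧ σ b = y ∧ σ c = z ∧ σ d = u :=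
    ⟨hσ 0, hσ 1, hσ 2, hσ 3⟩
  have hcomm : (swap a b).trans ((swap c d).trans σ) = (swap c d).trans ((swap a b).trans σ) := by
    have hdisj : (swap a b).Disjoint (swap c d) := Perm.disjoint_swap_swap <| by
      simp [hab.ne, hcd.ne, hac, had, hbc, hbd]
    rw [← trans_assoc, ← trans_assoc, ← Perm.mul_def, ← Perm.mul_def, hdisj.commute.eq]
  refine ⟨σ, (swap a b).trans σ, (swap c d).trans ((swap a b).trans σ), (swap c d).trans σ,
    adj_swap_trans hab (by rwa [hσa, hσb]), adj_swap_trans hcd ?_,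
    hcomm ▸ (adj_swap_trans hab ?_).symm, (adj_swap_trans hcd (by rwa [hσc, hσd])).symm,
    fun h => hab.ne ?_, fun h => hab.ne ?_⟩
  · simpa [swap_apply_of_ne_of_ne hac.symm hbc.symm, swap_apply_of_ne_of_ne had.symm hbd.symm,
      hσc, hσd]
  · simpa [swap_apply_of_ne_of_ne hac had, swap_apply_of_ne_of_ne hbc hbd, hσa, hσb]
  · simpa [swap_apply_of_ne_of_ne hac had] using congrArg (· a) h
  · simpa [swap_apply_of_ne_of_ne hac had, eq_comm] using congrArg (· a) h

theorem hasFourCycle_of_hasTriangle [DecidableEq W] (e : V ≃ W) (hX : X.HasTriangle)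
    (hY : Y.HasTriangle) : (FS X Y).HasFourCycle := by
  obtain ⟨a, b, c, hab, hbc, hac⟩ := hX
  obtain ⟨x, y, z, hxy, hyz, hxz⟩ := hY
  obtain ⟨σ, hσ⟩ := exists_extending_pair e (f := ![a, b, c]) (g := ![x, y, z])
    (by simp [Function.Injective, Fin.forall_fin_succ, hab.ne, hbc.ne, hac.ne, eq_comm])
    (by simp [Function.Injective, Fin.forall_fin_succ, hxy.ne, hyz.ne, hxz.ne, eq_comm])
  obtain ⟨hσa, hσb, hσc⟩ : σ a = x ∧ σ b = y ∧ σ c = z := ⟨hσ 0, hσ 1, hσ 2⟩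
  have hrot : (swap a b).trans ((swap a c).trans σ) = (swap b c).trans ((swap a b).trans σ) := by
    rw [← trans_assoc, ← trans_assoc, ← Perm.mul_def, ← Perm.mul_def,
      mul_swap_eq_swap_mul (swap a b) b c, swap_apply_right,
      swap_apply_of_ne_of_ne hac.ne.symm hbc.ne.symm]
  refine ⟨σ, (swap a b).trans σ, (swap b c).trans ((swap a b).trans σ), (swap a c).trans σ,
    adj_swap_trans hab (by rwa [hσa, hσb]), adj_swap_trans hbc ?_,
    hrot ▸ (adj_swap_trans hab ?_).symm, (adj_swap_trans hac (by rwa [hσa, hσc])).symm,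
    fun h => hab.ne ?_, fun h => hbc.ne ?_⟩
  · simpa [swap_apply_of_ne_of_ne hac.ne.symm hbc.ne.symm, hσa, hσc] using hxz
  · simpa [swap_apply_of_ne_of_ne hab.ne.symm hbc.ne, hσb, hσc] using hyz.symm
  · simpa [swap_apply_of_ne_of_ne hab.ne hac.ne] using congrArg (· a) h
  · simpa using congrArg (· a) h

end FS

/-- The girth of `FS(X, Y)` is `4` iff either both `X` and `Y` contain two vertex-disjoint
edges, or both contain a triangle. -/
theorem stmt8 {V W : Type} [Fintype V] [Fintype W] (n : ℕ)
    (hV : Fintype.card V = n) (hW : Fintype.card W = n)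
    (X : SimpleGraph V) (Y : SimpleGraph W) :
    (FS X Y).egirth = 4 ↔
      ((∃ a b c d : V, X.Adj a b ∧ X.Adj c d ∧ a ≠ c ∧ a ≠ d ∧ b ≠ c ∧ b ≠ d) ∧
          (∃ a b c d : W, Y.Adj a b ∧ Y.Adj c d ∧ a ≠ c ∧ a ≠ d ∧ b ≠ c ∧ b ≠ d)) ∨
        ((∃ a b c : V, X.Adj a b ∧ X.Adj b c ∧ X.Adj a c) ∧
          (∃ a b c : W, Y.Adj a b ∧ Y.Adj b c ∧ Y.Adj a c)) := by
  classical
  have e : V ≃ W := Fintype.equivOfCardEq (hV.trans hW.symm)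
  rw [egirth_eq_four_iff_hasFourCycle FS.isBipartite]
  refine ⟨FS.disjointEdges_or_triangles_of_hasFourCycle, ?_⟩
  rintro (⟨hX, hY⟩ | ⟨hX, hY⟩)
  · exact FS.hasFourCycle_of_hasTwoDisjointEdges e hX hY
  · exact FS.hasFourCycle_of_hasTriangle e hX hY
end

section
/- For n ≥ 3, every connected component of FS(Cycle_n, Star_n) is isomorphic to the cycle graph Cycle_{n(n−1)}; that is, for each connected component, the induced subgraph of FS(Cycle_n, Star_n) on the vertices of that component is isomorphic to Cycle_{n(n−1)}. -/
open SimpleGraph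

/-- The star graph on `Fin n`: the vertex with value `n - 1` (playing the role of the
vertex `n` of `{1, …, n}`) is adjacent to all other vertices, and there are no
other edges. -/
def starGraph (n : ℕ) : SimpleGraph (Fin n) where
  Adj a b := a ≠ b ∧ (a.val = n - 1 ∨ b.val = n - 1)
  symm := by constructor; rintro a b ⟨h1, h2⟩; exact ⟨h1.symm, h2.symm⟩
  loopless := by constructor; rintro a ⟨h, _⟩; exact h rfl

/-! A bijection `σ` has a *hole* `σ⁻¹(centre)`, and the only admissible swaps exchange the hole
with one of its two neighbours on the cycle. So `FS(Cycle_n, Star_n)` is the graph of the injective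
map `holeStep` moving the hole one step forward, and every component is a cycle whose length is the
period of `holeStep`. Recording a configuration by its hole and by the word of tokens read clockwise
after the hole, `holeStep` advances the hole by one in `ℤ/n` and rotates the word by one letter in
`ℤ/(n-1)`; as the letters are distinct, the period is `lcm(n, n-1) = n(n-1)`. -/

open Function Fin.CommRing

namespace SimpleGraph

variable {α : Type*} {f : α → α}

theorem fromRel_reachable_iterate (x : α) (k : ℕ) :
    (fromRel (f · = ·)).Reachable x (f^[k] x) := by
  induction k with
  | zero => rfl
  | succ k ih =>
    refine ih.trans ?_
    rw [iterate_succ_apply']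
    by_cases h : f^[k] x = f (f^[k] x)
    · rw [← h]
    · exact Adj.reachable ⟨h, Or.inl rfl⟩

theorem exists_iterate_eq_of_fromRel_reachable (hf : Injective f) {x y : α}
    (hx : 0 < minimalPeriod f x) (h : (fromRel (f · = ·)).Reachable x y) :
    ∃ k, f^[k] x = y := by
  rw [reachable_iff_reflTransGen] at h
  induction h with
  | refl => exact ⟨0, rfl⟩
  | tail _ hadj ih =>
    obtain ⟨k, rfl⟩ := ih
    rcases hadj.2 with h | h
    · exact ⟨k + 1, by rw [iterate_succ_apply', h]⟩
    · -- by periodicity `f^[k] x = f (f^[k + p - 1] x)`, and `f` is injective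
      refine ⟨k + minimalPeriod f x - 1, hf ?_⟩
      rw [h, ← iterate_succ_apply' f, Nat.succ_eq_add_one, Nat.sub_add_cancel (by omega),
        iterate_add_minimalPeriod_eq]

theorem nonempty_induce_connectedComponentMk_iso_cycleGraph (hf : Injective f) {x : α}
    (hx : 0 < minimalPeriod f x) :
    Nonempty ((fromRel (f · = ·)).induce ((fromRel (f · = ·)).connectedComponentMk x).supp ≃g
      cycleGraph (minimalPeriod f x)) := by
  obtain ⟨N, hN⟩ : ∃ N, minimalPeriod f x = N + 1 := Nat.exists_eq_add_one.2 hx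
  rw [hN, cycleGraph_eq_circulantGraph]
  let φ : Fin (N + 1) → ((fromRel (f · = ·)).connectedComponentMk x).supp := fun k =>
    ⟨f^[k] x, ConnectedComponent.eq.2 (fromRel_reachable_iterate x k).symm⟩
  have hφ_succ (k : Fin (N + 1)) : (φ (k + 1) : α) = f (φ k) := by
    change f^[(k + 1 : Fin (N + 1))] x = f (f^[k] x)
    rw [← iterate_succ_apply' f, ← iterate_mod_minimalPeriod_eq (n := (k : ℕ).succ), hN,
      Fin.val_add, Fin.val_one', Nat.add_mod_mod]
  have hφ_inj : Injective φ := fun i j h =>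
    Fin.ext (iterate_injOn_Iio_minimalPeriod (by simp [hN, i.isLt]) (by simp [hN, j.isLt])
      (congrArg Subtype.val h))
  have hφ_surj : Surjective φ := by
    rintro ⟨y, hy⟩
    obtain ⟨k, rfl⟩ := exists_iterate_eq_of_fromRel_reachable hf hx
      (ConnectedComponent.eq.1 hy).symm
    refine ⟨⟨k % (N + 1), Nat.mod_lt _ N.succ_pos⟩, Subtype.ext ?_⟩
    simp only [φ]
    rw [← hN, iterate_mod_minimalPeriod_eq]
  refine ⟨(RelIso.mk (Equiv.ofBijective φ ⟨hφ_inj, hφ_surj⟩) ?_).symm⟩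
  intro i j
  change (fromRel (f · = ·)).Adj (φ i : α) (φ j) ↔ (circulantGraph {1}).Adj i j
  simp only [circulantGraph, fromRel_adj, ← hφ_succ, Ne, Subtype.val_inj, hφ_inj.eq_iff,
    Set.mem_singleton_iff, sub_eq_iff_eq_add']
  rw [eq_comm (a := i + 1), eq_comm (a := j + 1), or_comm]

end SimpleGraph

theorem Equiv.eq_swap_trans_iff {α β : Type*} [DecidableEq α] {σ τ : α ≃ β} {a b : α} :
    τ = (Equiv.swap a b).trans σ ↔
      τ a = σ b ∧ τ b = σ a ∧ ∀ c, c ≠ a → c ≠ b → τ c = σ c := by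
  constructor
  · rintro rfl
    exact ⟨by simp, by simp, fun c hca hcb => by simp [Equiv.swap_apply_of_ne_of_ne hca hcb]⟩
  · rintro ⟨ha, hb, hc⟩
    ext c
    rw [Equiv.trans_apply, Equiv.swap_apply_def]
    split_ifs with hca hcb
    exacts [hca ▸ ha, hcb ▸ hb, hc c hca hcb]

theorem FS_adj_iff_exists_swap {V W : Type*} [DecidableEq V] {X : SimpleGraph V}
    {Y : SimpleGraph W} {σ τ : V ≃ W} :
    (FS X Y).Adj σ τ ↔
      ∃ a b, X.Adj a b ∧ Y.Adj (σ a) (σ b) ∧ τ = (Equiv.swap a b).trans σ := by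
  simp only [Equiv.eq_swap_trans_iff]
  rfl

namespace FriendsStrangersCycleStar

variable {m : ℕ}

theorem starGraph_adj_iff {a b : Fin (m + 1)} :
    (_root_.starGraph (m + 1)).Adj a b ↔ a ≠ b ∧ (a = Fin.last m ∨ b = Fin.last m) := by
  simp [_root_.starGraph, Fin.ext_iff]

theorem cycleGraph_adj_iff {a b : Fin (m + 1)} :
    (cycleGraph (m + 1)).Adj a b ↔ a ≠ b ∧ (a = b + 1 ∨ b = a + 1) := by
  simp [cycleGraph_eq_circulantGraph, circulantGraph, sub_eq_iff_eq_add']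

def hole (σ : Fin (m + 1) ≃ Fin (m + 1)) : Fin (m + 1) := σ.symm (Fin.last m)

def holeStep (σ : Fin (m + 1) ≃ Fin (m + 1)) : Fin (m + 1) ≃ Fin (m + 1) :=
  (Equiv.swap (hole σ) (hole σ + 1)).trans σ

variable {σ τ : Fin (m + 1) ≃ Fin (m + 1)}

theorem apply_eq_last_iff {a : Fin (m + 1)} : σ a = Fin.last m ↔ a = hole σ :=
  (σ.eq_symm_apply).symm

theorem apply_hole : σ (hole σ) = Fin.last m :=
  σ.apply_symm_apply _

theorem hole_holeStep : hole (holeStep σ) = hole σ + 1 := by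
  rw [eq_comm, ← apply_eq_last_iff, holeStep, Equiv.trans_apply, Equiv.swap_apply_right,
    apply_eq_last_iff]

theorem holeStep_injective : Injective (holeStep (m := m)) := by
  intro σ τ h
  have hhole : hole σ = hole τ :=
    add_right_cancel (hole_holeStep.symm.trans (h ▸ hole_holeStep))
  rw [holeStep, holeStep, hhole] at h
  exact Equiv.ext fun x => by
    simpa using DFunLike.congr_fun h (Equiv.swap (hole τ) (hole τ + 1) x)

theorem holeStep_eq_swap_trans_or {b : Fin (m + 1)} (hb : (cycleGraph (m + 1)).Adj (hole σ) b) :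
    holeStep σ = (Equiv.swap (hole σ) b).trans σ ∨
      holeStep ((Equiv.swap (hole σ) b).trans σ) = σ := by
  rcases (cycleGraph_adj_iff.1 hb).2 with h | rfl
  · right
    have hhole : hole ((Equiv.swap (hole σ) b).trans σ) = b := by
      rw [eq_comm, ← apply_eq_last_iff, Equiv.trans_apply, Equiv.swap_apply_right,
        apply_eq_last_iff]
    rw [holeStep, hhole, ← h, Equiv.swap_comm, ← Equiv.trans_assoc, Equiv.swap_swap,
      Equiv.refl_trans]
  · exact Or.inl rfl

theorem FS_adj_holeStep (h : holeStep σ ≠ σ) :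
    (FS (cycleGraph (m + 1)) (_root_.starGraph (m + 1))).Adj σ (holeStep σ) := by
  have hne : hole σ ≠ hole σ + 1 := fun heq => h (by
    rw [holeStep, ← heq, Equiv.swap_self, Equiv.refl_trans])
  exact FS_adj_iff_exists_swap.2 ⟨hole σ, hole σ + 1,
    cycleGraph_adj_iff.2 ⟨hne, Or.inr rfl⟩,
    starGraph_adj_iff.2 ⟨σ.injective.ne hne, Or.inl apply_hole⟩, rfl⟩

theorem FS_adj_iff :
    (FS (cycleGraph (m + 1)) (_root_.starGraph (m + 1))).Adj σ τ ↔
      σ ≠ τ ∧ (holeStep σ = τ ∨ holeStep τ = σ) := by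
  constructor
  · intro hadj
    refine ⟨hadj.ne, ?_⟩
    obtain ⟨a, b, hab, hY, rfl⟩ := FS_adj_iff_exists_swap.1 hadj
    rcases (starGraph_adj_iff.1 hY).2 with ha | hb
    · rw [apply_eq_last_iff] at ha
      subst ha
      exact holeStep_eq_swap_trans_or hab
    · rw [apply_eq_last_iff] at hb
      subst hb
      rw [Equiv.swap_comm]
      exact holeStep_eq_swap_trans_or hab.symm
  · rintro ⟨hne, rfl | rfl⟩
    · exact FS_adj_holeStep hne.symm
    · exact (FS_adj_holeStep hne).symm

theorem FS_eq_fromRel :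
    FS (cycleGraph (m + 1)) (_root_.starGraph (m + 1)) = fromRel (holeStep · = ·) := by
  ext σ τ
  rw [FS_adj_iff, fromRel_adj]

def word (σ : Fin (m + 1) ≃ Fin (m + 1)) (j : Fin m) : Fin (m + 1) :=
  σ (hole σ + ((j.val + 1 : ℕ) : Fin (m + 1)))

theorem word_injective : Injective (word σ) := by
  intro i j h
  have hval := congrArg Fin.val (add_left_cancel (σ.injective h))
  rw [Fin.val_natCast, Fin.val_natCast, Nat.mod_eq_of_lt (by omega),
    Nat.mod_eq_of_lt (by omega)] at hval
  exact Fin.ext (by omega)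

theorem eq_of_hole_eq_of_word_eq (h1 : hole σ = hole τ) (h2 : word σ = word τ) : σ = τ := by
  refine Equiv.ext fun x => ?_
  by_cases hx : x = hole σ
  · rw [hx, apply_hole, h1, apply_hole]
  · obtain ⟨d, hd⟩ : ∃ d, x = hole σ + d := ⟨x - hole σ, (add_sub_cancel _ _).symm⟩
    have hd0 : d.val ≠ 0 := fun h => hx (by rw [hd, show d = 0 from Fin.ext h, add_zero])
    have hjd : ((d.val - 1 + 1 : ℕ) : Fin (m + 1)) = d := by
      rw [Nat.sub_add_cancel (Nat.pos_of_ne_zero hd0), Fin.cast_val_eq_self d]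
    have := congrFun h2 ⟨d - 1, by omega⟩
    rwa [word, word, hjd, ← h1, ← hd] at this

theorem natCast_ne_zero_of_pos_of_lt {a : ℕ} (h₀ : 0 < a) (h : a < m + 1) :
    (a : Fin (m + 1)) ≠ 0 := by
  rw [Ne, Fin.natCast_eq_zero]
  exact fun hdvd => absurd (Nat.le_of_dvd h₀ hdvd) (by omega)

theorem word_holeStep [NeZero m] (j : Fin m) : word (holeStep σ) j = word σ (j + 1) := by
  rw [word, word, hole_holeStep, holeStep, Equiv.trans_apply, Fin.val_add, Fin.val_one',
    Nat.add_mod_mod]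
  congr 1
  rcases (show j.val + 1 ≤ m from j.isLt).lt_or_eq with hj | hj
  · rw [Nat.mod_eq_of_lt hj, Equiv.swap_apply_of_ne_of_ne]
    · push_cast
      ring
    · rw [Ne, add_assoc, add_eq_left, show (1 : Fin (m + 1)) + ((j.val + 1 : ℕ) : Fin (m + 1)) =
        ((j.val + 2 : ℕ) : Fin (m + 1)) by push_cast; ring]
      exact natCast_ne_zero_of_pos_of_lt (by omega) (by omega)
    · rw [Ne, add_eq_left]
      exact natCast_ne_zero_of_pos_of_lt (by omega) (by omega)
  · rw [hj, Nat.mod_self, add_assoc, add_comm 1, ← Nat.cast_add_one, Fin.natCast_self, add_zero,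
      Equiv.swap_apply_left, zero_add, Nat.cast_one]

theorem hole_iterate_holeStep (k : ℕ) : hole (holeStep^[k] σ) = hole σ + (k : Fin (m + 1)) := by
  induction k with
  | zero => simp
  | succ k ih => rw [iterate_succ_apply', hole_holeStep, ih, Nat.cast_succ, add_assoc]

theorem word_iterate_holeStep [NeZero m] (k : ℕ) (j : Fin m) :
    word (holeStep^[k] σ) j = word σ (j + (k : Fin m)) := by
  induction k generalizing j with
  | zero => simp
  | succ k ih =>
    rw [iterate_succ_apply', word_holeStep, ih, Nat.cast_succ, add_right_comm, add_assoc]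

theorem iterate_holeStep_eq_self_iff [NeZero m] {k : ℕ} :
    holeStep^[k] σ = σ ↔ m + 1 ∣ k ∧ m ∣ k := by
  constructor
  · intro h
    have hhole := hole_iterate_holeStep (σ := σ) k
    have hword := word_iterate_holeStep (σ := σ) k 0
    rw [h, left_eq_add, Fin.natCast_eq_zero] at hhole
    rw [h, zero_add] at hword
    exact ⟨hhole, Fin.natCast_eq_zero.1 (word_injective hword).symm⟩
  · rintro ⟨hk₁, hk₂⟩
    refine eq_of_hole_eq_of_word_eq ?_ (funext fun j => ?_)
    · rw [hole_iterate_holeStep, Fin.natCast_eq_zero.2 hk₁, add_zero]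
    · rw [word_iterate_holeStep, Fin.natCast_eq_zero.2 hk₂, add_zero]

theorem minimalPeriod_holeStep [NeZero m] : minimalPeriod holeStep σ = (m + 1) * m := by
  refine Nat.dvd_antisymm (IsPeriodicPt.minimalPeriod_dvd ?_) ?_
  · exact iterate_holeStep_eq_self_iff.2 ⟨dvd_mul_right _ _, dvd_mul_left _ _⟩
  · obtain ⟨h₁, h₂⟩ := iterate_holeStep_eq_self_iff.1 (iterate_minimalPeriod (x := σ))
    exact (Nat.coprime_self_add_left.2 (Nat.coprime_one_left m)).mul_dvd_of_dvd_of_dvd h₁ h₂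

end FriendsStrangersCycleStar

open FriendsStrangersCycleStar in
/-- Every connected component of `FS(Cycle_n, Star_n)` (as an induced subgraph) is
isomorphic to the cycle graph on `n(n-1)` vertices. -/
theorem stmt10 (n : ℕ) (hn : 3 ≤ n)
    (c : (FS (cycleGraph n) (_root_.starGraph n)).ConnectedComponent) :
    Nonempty
      (((FS (cycleGraph n) (_root_.starGraph n)).induce c.supp) ≃g cycleGraph (n * (n - 1))) := by
  obtain ⟨m, rfl⟩ : ∃ m, n = m + 1 := ⟨n - 1, by omega⟩
  have : NeZero m := ⟨by omega⟩
  obtain ⟨σ, rfl⟩ := c.exists_rep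
  have hperiod : minimalPeriod holeStep σ = (m + 1) * m := minimalPeriod_holeStep
  have hiso := nonempty_induce_connectedComponentMk_iso_cycleGraph holeStep_injective
    (hperiod ▸ Nat.mul_pos m.succ_pos (NeZero.pos m))
  rw [← FS_eq_fromRel, hperiod] at hiso
  rwa [Nat.add_sub_cancel]
end

section
/- Let X be a simple graph on n vertices with finite girth g(X). Then the girth of FS(X, Star_n) satisfies g(FS(X, Star_n)) ≤ g(X) · (g(X) − 1). -/
/-!
Take a shortest cycle `u 0, …, u (g - 1)` of `X` and a bijection sending `u 0` to the centre of
the star. Sliding the centre around the cycle, i.e. swapping it in turn with `u 1, u 2, …`, is a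
walk in `FS X (starGraph n)`. One round has net effect the `(g - 1)`-cycle `(u 1 … u (g - 1))`,
so the walk closes up after `g - 1` rounds, that is after `g * (g - 1)` steps. The bijections met
on the way are distinct: the position of the centre recovers the step modulo `g`, and the power
of the rotation recovers the round.
-/

open SimpleGraph

namespace List

variable {α : Type*} [DecidableEq α]

theorem formPerm_cons_concat_self {x : α} {l : List α} (h : (x :: l).Nodup) :
    formPerm (x :: (l ++ [x])) = formPerm l := by
  cases l with
  | nil => rw [nil_append, formPerm_pair, Equiv.swap_self]; rfl
  | cons y l =>
    have hrot : formPerm (y :: (l ++ [x])) = formPerm (x :: y :: l) := by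
      simpa using formPerm_rotate_one (x :: y :: l) h
    rw [cons_append, formPerm_cons_cons, hrot, formPerm_cons_cons, Equiv.swap_mul_self_mul]

theorem orderOf_formPerm {l : List α} (hl : l.Nodup) (hne : l ≠ []) :
    orderOf l.formPerm = l.length := by
  have hlen : 0 < l.length := length_pos_iff.mpr hne
  refine (orderOf_eq_iff hlen).mpr
    ⟨formPerm_pow_length_eq_one_of_nodup l hl, fun k hk hk0 hone => ?_⟩
  have h := formPerm_pow_apply_getElem l hl k 0 hlen
  simp only [hone, Nat.zero_add, Nat.mod_eq_of_lt hk, Equiv.Perm.one_apply] at h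
  have := hl.getElem_inj_iff.mp h
  omega

end List

section PeriodicCycle

variable {α : Type*} {G : SimpleGraph α}

lemma exists_periodic_of_cycleGraph_isContained {m : ℕ} (hm : 2 ≤ m)
    (h : cycleGraph m ⊑ G) :
    ∃ f : ℕ → α, f.Periodic m ∧ Set.InjOn f (Set.Iio m) ∧
      ∀ t, G.Adj (f t) (f (t + 1)) := by
  obtain ⟨c⟩ := h
  have : NeZero m := ⟨by omega⟩
  refine ⟨fun t => c (Fin.ofNat m t), fun t => congrArg c (Fin.ext (by simp)),
    fun s hs t ht hst => ?_, fun t => c.toHom.map_adj ?_⟩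
  · simpa [Fin.ext_iff, Nat.mod_eq_of_lt hs, Nat.mod_eq_of_lt ht] using c.injective hst
  · have hsucc : Fin.ofNat m (t + 1) = Fin.ofNat m t + 1 := by
      ext; simp [Fin.val_add, Nat.add_mod]
    rw [cycleGraph_adj', hsucc, add_sub_cancel_left, Fin.val_one', Nat.mod_eq_of_lt hm]
    simp

lemma cycleGraph_isContained_of_periodic {m : ℕ} {f : ℕ → α} (hf : f.Periodic m)
    (hinj : Set.InjOn f (Set.Iio m)) (hadj : ∀ t, G.Adj (f t) (f (t + 1))) :
    cycleGraph m ⊑ G := by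
  have hsucc : ∀ i j : Fin m, (j - i).val = 1 → G.Adj (f i) (f j) := by
    intro i j h
    have : NeZero m := ⟨i.pos.ne'⟩
    have hj : (j : ℕ) = (i + 1) % m := by
      rw [← h, ← Fin.val_add, add_sub_cancel]
    rw [hj, hf.map_mod_nat]
    exact hadj i
  refine ⟨⟨⟨fun i => f i, fun {i j} h => ?_⟩,
    fun i j h => Fin.ext (hinj i.isLt j.isLt h)⟩⟩
  rcases cycleGraph_adj'.mp h with h | h
  · exact (hsucc j i h).symm
  · exact hsucc i j h

end PeriodicCycle

lemma nodup_map_range'_of_injOn {V : Type*} {u : ℕ → V} {g : ℕ}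
    (hinj : Set.InjOn u (Set.Iio g)) {s n : ℕ} (h : s + n ≤ g) :
    ((List.range' s n).map u).Nodup :=
  (List.nodup_range' (s := s) (n := n)).map_on fun x hx y hy hxy => by
    rw [List.mem_range'_1] at hx hy
    exact hinj (by simp; omega) (by simp; omega) hxy

section SlidePerm

variable {V : Type*} [DecidableEq V] (u : ℕ → V)

def slidePerm (t : ℕ) : Equiv.Perm V := ((List.range (t + 1)).map u).formPerm

lemma slidePerm_zero : slidePerm u 0 = 1 := by
  simp [slidePerm]

lemma slidePerm_succ (t : ℕ) :
    slidePerm u (t + 1) = slidePerm u t * Equiv.swap (u t) (u (t + 1)) := by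
  simp only [slidePerm, List.range_succ, List.map_append, List.map_cons, List.map_nil,
    List.append_assoc, List.singleton_append]
  exact List.formPerm_append_pair _ _ _

lemma slidePerm_apply_self (t : ℕ) : slidePerm u t (u t) = u 0 := by
  induction t with
  | zero => simp [slidePerm_zero]
  | succ t ih => rw [slidePerm_succ, Equiv.Perm.mul_apply, Equiv.swap_apply_right, ih]

variable {u} {g : ℕ}

lemma slidePerm_add_period (hu : u.Periodic g) (t : ℕ) :
    slidePerm u (t + g) = slidePerm u g * slidePerm u t := by
  induction t with
  | zero => simp [slidePerm_zero]
  | succ t ih =>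
    have hnext : u (t + g + 1) = u (t + 1) := by rw [Nat.add_right_comm]; exact hu _
    rw [Nat.add_right_comm, slidePerm_succ, ih, hu, hnext, mul_assoc, slidePerm_succ]

lemma slidePerm_mul_add (hu : u.Periodic g) (k t : ℕ) :
    slidePerm u (k * g + t) = slidePerm u g ^ k * slidePerm u t := by
  induction k with
  | zero => simp
  | succ k ih => rw [Nat.succ_mul, Nat.add_right_comm, slidePerm_add_period hu, ih, pow_succ',
      mul_assoc]

lemma slidePerm_period (hu : u.Periodic g) (hinj : Set.InjOn u (Set.Iio g)) (hg : 1 ≤ g) :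
    slidePerm u g = ((List.range' 1 (g - 1)).map u).formPerm := by
  have hrange : (List.range' 0 g).map u = u 0 :: (List.range' 1 (g - 1)).map u := by
    obtain ⟨k, rfl⟩ := Nat.exists_eq_add_of_le' hg
    simp [List.range'_succ]
  have hsplit :
      (List.range (g + 1)).map u = u 0 :: ((List.range' 1 (g - 1)).map u ++ [u 0]) := by
    rw [List.range_succ, List.map_append, List.range_eq_range', hrange, List.map_singleton,
      ← zero_add g, hu 0, List.cons_append]
  have hnodup := nodup_map_range'_of_injOn hinj (s := 0) (n := g) (by omega)
  rw [hrange] at hnodup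
  rw [slidePerm, hsplit, List.formPerm_cons_concat_self hnodup]

lemma orderOf_slidePerm_period (hu : u.Periodic g) (hinj : Set.InjOn u (Set.Iio g))
    (hg : 2 ≤ g) : orderOf (slidePerm u g) = g - 1 := by
  rw [slidePerm_period hu hinj (by omega),
    List.orderOf_formPerm (nodup_map_range'_of_injOn hinj (by omega)), List.length_map,
    List.length_range']
  rw [Ne, List.map_eq_nil_iff, List.range'_eq_nil_iff]
  omega

lemma slidePerm_periodic (hu : u.Periodic g) (hinj : Set.InjOn u (Set.Iio g)) (hg : 2 ≤ g) :
    (slidePerm u).Periodic (g * (g - 1)) := fun t => by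
  rw [add_comm, mul_comm, slidePerm_mul_add hu, ← orderOf_slidePerm_period hu hinj hg,
    pow_orderOf_eq_one, one_mul]

lemma slidePerm_injOn (hu : u.Periodic g) (hinj : Set.InjOn u (Set.Iio g)) (hg : 2 ≤ g) :
    Set.InjOn (slidePerm u) (Set.Iio (g * (g - 1))) := by
  intro s hs t ht hst
  -- after `s` steps the centre sits at `u s`
  have hmod : s % g = t % g := by
    refine hinj (Nat.mod_lt _ (by omega)) (Nat.mod_lt _ (by omega)) ?_
    rw [hu.map_mod_nat, hu.map_mod_nat]
    apply (slidePerm u s).injective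
    rw [slidePerm_apply_self, hst, slidePerm_apply_self]
  have hpow : slidePerm u g ^ (s / g) = slidePerm u g ^ (t / g) := by
    have h := hst
    rw [← Nat.div_add_mod' s g, ← Nat.div_add_mod' t g, slidePerm_mul_add hu,
      slidePerm_mul_add hu, hmod] at h
    exact mul_right_cancel h
  rw [pow_eq_pow_iff_modEq, orderOf_slidePerm_period hu hinj hg] at hpow
  have hdiv := hpow.eq_of_lt_of_lt (Nat.div_lt_of_lt_mul hs) (Nat.div_lt_of_lt_mul ht)
  rw [← Nat.div_add_mod' s g, ← Nat.div_add_mod' t g, hmod, hdiv]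

end SlidePerm

section FriendsAndStrangers

variable {V W : Type*} {X : SimpleGraph V} {Y : SimpleGraph W}

lemma FS_adj_swap_trans [DecidableEq V] {σ : V ≃ W} {a b : V} (hX : X.Adj a b)
    (hY : Y.Adj (σ a) (σ b)) : (FS X Y).Adj σ ((Equiv.swap a b).trans σ) :=
  ⟨a, b, hX, hY, by simp, by simp, fun c hca hcb => by
    simp [Equiv.swap_apply_of_ne_of_ne hca hcb]⟩

theorem cycleGraph_mul_pred_isContained_FS [DecidableEq V] {g : ℕ} (hg : 2 ≤ g)
    (hX : cycleGraph g ⊑ X) {y : W} (hy : Y.IsUniversal y) (e : V ≃ W) :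
    cycleGraph (g * (g - 1)) ⊑ FS X Y := by
  obtain ⟨u, hu, hinj, hadj⟩ := exists_periodic_of_cycleGraph_isContained hg hX
  let σ : V ≃ W := (Equiv.swap (u 0) (e.symm y)).trans e
  let F : ℕ → V ≃ W := fun t => (slidePerm u t).trans σ
  refine cycleGraph_isContained_of_periodic (f := F)
    (fun t => by simp only [F, slidePerm_periodic hu hinj hg t]) ?_ fun t => ?_
  · intro s hs t ht hst
    refine slidePerm_injOn hu hinj hg hs ht (Equiv.ext fun x => σ.injective ?_)
    exact congrArg (· x) hst
  · have hhole : F t (u t) = y := by simp [F, σ, slidePerm_apply_self]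
    have hstep : F (t + 1) = (Equiv.swap (u t) (u (t + 1))).trans (F t) := by
      ext x; simp [F, slidePerm_succ]
    rw [hstep]
    refine FS_adj_swap_trans (hadj t) ?_
    rw [hhole]
    exact hy (hhole ▸ (F t).injective.ne (hadj t).ne)

end FriendsAndStrangers

lemma starGraph_isUniversal {n : ℕ} (hn : 0 < n) :
    (_root_.starGraph n).IsUniversal ⟨n - 1, by omega⟩ :=
  fun _ hw => ⟨hw, Or.inl rfl⟩

/-- If `X` has finite girth `g(X)`, then the girth of `FS(X, Star_n)` is at most
`g(X) · (g(X) - 1)`. -/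
theorem stmt11 {V : Type} [Fintype V] (n : ℕ) (hV : Fintype.card V = n)
    (X : SimpleGraph V) (hfin : X.egirth ≠ ⊤) :
    (FS X (_root_.starGraph n)).egirth ≤ X.egirth * (X.egirth - 1) := by
  classical
  obtain ⟨a, w, hw, hwl⟩ := exists_egirth_eq_length.mpr fun h => hfin (egirth_eq_top.mpr h)
  have hg := hw.three_le_length
  have hn : 0 < n := hV ▸ Fintype.card_pos_iff.mpr ⟨a⟩
  have hX : cycleGraph w.length ⊑ X := (cycleGraph_isContained_iff hg).mpr ⟨a, w, hw, rfl⟩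
  have hm : 2 < w.length * (w.length - 1) :=
    lt_of_lt_of_le (by omega) (Nat.mul_le_mul hg (Nat.le_sub_one_of_lt hg))
  obtain ⟨σ, c, hc, hcl⟩ := (cycleGraph_isContained_iff hm).mp
    (cycleGraph_mul_pred_isContained_FS (by omega) hX (starGraph_isUniversal hn)
      (Fintype.equivFinOfCardEq hV))
  calc (FS X (_root_.starGraph n)).egirth ≤ c.length := egirth_le_length hc
    _ = X.egirth * (X.egirth - 1) := by
      rw [hcl, hwl, Nat.cast_mul, ENat.natCast_sub, Nat.cast_one]
end
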